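/- Let n ≥ 1, let f : [0,1] → ℝ be continuously differentiable, and let x ∈ [0,1]. Then the derivative of the polynomial x ↦ D_n(f;x) satisfies |(D_n f)′(x)| ≤ (n/(n+2))·‖f′‖_∞ ≤ ‖f′‖_∞. -/

import Mathlib

open scoped BigOperators
open Set Filter MeasureTheory

/-- Bernstein fundamental function `p_{n,k}` (vanishes for `k > n` since `choose = 0`). -/
noncomputable def bp (n k : ℕ) (x : ℝ) : ℝ :=
  (n.choose k : ℝ) * x ^ k * (1 - x) ^ (n - k)

/-- Bernstein fundamental function with integer index, vanishing for negative `k`. -/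
noncomputable def bpz (n : ℕ) (k : ℤ) (x : ℝ) : ℝ :=
  if 0 ≤ k then bp n k.toNat x else 0

/-- The classical Bernstein operator `B_n`. -/
noncomputable def Bern (n : ℕ) (f : ℝ → ℝ) (x : ℝ) : ℝ :=
  ∑ k ∈ Finset.range (n + 1), bp n k x * f (k / n)

/-- Modified fundamental function `p_{n,k}^{M,1}` with `a(x,n) = a1*x + a0`. -/
noncomputable def bpM1 (a0 a1 : ℝ) (n k : ℕ) (x : ℝ) : ℝ :=
  (a1 * x + a0) * bp (n - 1) k x + (a1 * (1 - x) + a0) * bpz (n - 1) ((k : ℤ) - 1) x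

/-- The modified Bernstein operator `B_n^{M,1}`. -/
noncomputable def BernM1 (a0 a1 : ℝ) (n : ℕ) (f : ℝ → ℝ) (x : ℝ) : ℝ :=
  ∑ k ∈ Finset.range (n + 1), bpM1 a0 a1 n k x * f (k / n)

/-- Second modified fundamental function `p_{n,k}^{M,2}`. -/
noncomputable def bpM2 (n k : ℕ) (x : ℝ) : ℝ :=
  ((n : ℝ) / 2 * x ^ 2 + (-1 - (n : ℝ) / 2) * x + 1) * bp (n - 2) k x
    + (n : ℝ) * x * (1 - x) * bpz (n - 2) ((k : ℤ) - 1) x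
    + ((n : ℝ) / 2 * x ^ 2 + (-(n : ℝ) / 2 + 1) * x) * bpz (n - 2) ((k : ℤ) - 2) x

/-- The second modified Bernstein operator `B_n^{M,2}`. -/
noncomputable def BernM2 (n : ℕ) (f : ℝ → ℝ) (x : ℝ) : ℝ :=
  ∑ k ∈ Finset.range (n + 1), bpM2 n k x * f (k / n)

/-- The Kantorovich operator `K_n`. -/
noncomputable def Kan (n : ℕ) (f : ℝ → ℝ) (x : ℝ) : ℝ :=
  ((n : ℝ) + 1) * ∑ k ∈ Finset.range (n + 1),
    bp n k x * ∫ t in ((k : ℝ) / (n + 1))..(((k : ℝ) + 1) / (n + 1)), f t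

/-- The modified Kantorovich operator `K_n^{M,1}`. -/
noncomputable def KanM1 (a0 a1 : ℝ) (n : ℕ) (f : ℝ → ℝ) (x : ℝ) : ℝ :=
  ((n : ℝ) + 1) * ∑ k ∈ Finset.range (n + 1),
    bpM1 a0 a1 n k x * ∫ t in ((k : ℝ) / (n + 1))..(((k : ℝ) + 1) / (n + 1)), f t

/-- The Durrmeyer operator `D_n`. -/
noncomputable def Dur (n : ℕ) (f : ℝ → ℝ) (x : ℝ) : ℝ :=
  ((n : ℝ) + 1) * ∑ k ∈ Finset.range (n + 1),
    bp n k x * ∫ t in (0:ℝ)..1, bp n k t * f t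

/-- The modified Durrmeyer operator `D_n^{M,1}`. -/
noncomputable def DurM1 (a0 a1 : ℝ) (n : ℕ) (f : ℝ → ℝ) (x : ℝ) : ℝ :=
  ((n : ℝ) + 1) * ∑ k ∈ Finset.range (n + 1),
    bpM1 a0 a1 n k x * ∫ t in (0:ℝ)..1, bp n k t * f t

/-- The genuine Bernstein–Durrmeyer operator `U_n`. -/
noncomputable def Gen (n : ℕ) (f : ℝ → ℝ) (x : ℝ) : ℝ :=
  (1 - x) ^ n * f 0 + x ^ n * f 1 +
    ((n : ℝ) - 1) * ∑ k ∈ Finset.Icc 1 (n - 1),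
      bp n k x * ∫ t in (0:ℝ)..1, bp (n - 2) (k - 1) t * f t

/-- The modified genuine Bernstein–Durrmeyer operator `U_n^{M,1}`. -/
noncomputable def GenM1 (a0 a1 : ℝ) (n : ℕ) (f : ℝ → ℝ) (x : ℝ) : ℝ :=
  (a1 * x + a0) * (1 - x) ^ (n - 1) * f 0 + (a1 * (1 - x) + a0) * x ^ (n - 1) * f 1 +
    ((n : ℝ) - 1) * ∑ k ∈ Finset.Icc 1 (n - 1),
      bpM1 a0 a1 n k x * ∫ t in (0:ℝ)..1, bp (n - 2) (k - 1) t * f t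

/-- First modulus of continuity on `[0,1]`. -/
noncomputable def omega1 (f : ℝ → ℝ) (δ : ℝ) : ℝ :=
  sSup {y | ∃ s t : ℝ, s ∈ Icc (0:ℝ) 1 ∧ t ∈ Icc (0:ℝ) 1 ∧ |s - t| ≤ δ ∧ y = |f s - f t|}

/-- Second modulus of smoothness on `[0,1]`. -/
noncomputable def omega2 (f : ℝ → ℝ) (δ : ℝ) : ℝ :=
  sSup {y | ∃ t h : ℝ, 0 < h ∧ h ≤ δ ∧ t - h ∈ Icc (0:ℝ) 1 ∧ t + h ∈ Icc (0:ℝ) 1 ∧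
    y = |f (t + h) - 2 * f t + f (t - h)|}

/-- Sup norm on `[0,1]`. -/
noncomputable def supNorm (g : ℝ → ℝ) : ℝ :=
  sSup {y | ∃ t ∈ Icc (0:ℝ) 1, y = |g t|}

/-!
Differentiating the Bernstein basis, `(D_n f)'(x) = n (n+1) ∑_{k<n} p_{n-1,k}(x) (c_{k+1} - c_k)`
with `c_k = ∫₀¹ p_{n,k} f`. Since `(n+1) (p_{n,k} - p_{n,k+1}) = p_{n+1,k+1}'` and `p_{n+1,k+1}`
vanishes at both endpoints when `k < n`, integration by parts gives
`c_{k+1} - c_k = (n+1)⁻¹ ∫₀¹ p_{n+1,k+1} f'`. Every `p_{m,j}` is nonnegative with integral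
`1/(m+1)`, so `|c_{k+1} - c_k| ≤ ‖f'‖_∞ / ((n+1)(n+2))`, and the `p_{n-1,k}(x)` sum to `1`.
-/

open scoped Interval

lemma bp_eq_eval (n k : ℕ) (x : ℝ) : bp n k x = (bernsteinPolynomial ℝ n k).eval x := by
  simp [bp, bernsteinPolynomial]

lemma continuous_bp (n k : ℕ) : Continuous (bp n k) := by
  unfold bp; fun_prop

lemma bp_nonneg (n k : ℕ) {x : ℝ} (hx : x ∈ Icc (0:ℝ) 1) : 0 ≤ bp n k x := by
  have h₀ := hx.1
  have h₁ := sub_nonneg.2 hx.2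
  unfold bp; positivity

lemma bp_of_lt {n k : ℕ} (h : n < k) (x : ℝ) : bp n k x = 0 := by
  simp [bp, Nat.choose_eq_zero_of_lt h]

lemma sum_bp (n : ℕ) (x : ℝ) : ∑ k ∈ Finset.range (n + 1), bp n k x = 1 := by
  simpa [bp_eq_eval, Polynomial.eval_finsetSum] using
    congrArg (Polynomial.eval x) (bernsteinPolynomial.sum ℝ n)

lemma hasDerivAt_bp_succ (n k : ℕ) (x : ℝ) :
    HasDerivAt (bp n (k + 1)) (n * (bp (n - 1) k x - bp (n - 1) (k + 1) x)) x := by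
  simp_rw [funext (bp_eq_eval n (k + 1)), bp_eq_eval]
  simpa [bernsteinPolynomial.derivative_succ] using (bernsteinPolynomial ℝ n (k + 1)).hasDerivAt x

lemma hasDerivAt_bp_zero (n : ℕ) (x : ℝ) :
    HasDerivAt (bp n 0) (-n * bp (n - 1) 0 x) x := by
  simp_rw [funext (bp_eq_eval n 0), bp_eq_eval]
  simpa [bernsteinPolynomial.derivative_zero] using (bernsteinPolynomial ℝ n 0).hasDerivAt x

lemma hasDerivAt_sum_bp_mul (n : ℕ) (a : ℕ → ℝ) (x : ℝ) :
    HasDerivAt (fun y => ∑ k ∈ Finset.range (n + 1), bp n k y * a k)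
      (n * ∑ k ∈ Finset.range n, bp (n - 1) k x * (a (k + 1) - a k)) x := by
  have hterm : ∀ k ∈ Finset.range (n + 1), HasDerivAt (fun y => bp n k y * a k)
      ((if k = 0 then -n * bp (n - 1) 0 x
        else n * (bp (n - 1) (k - 1) x - bp (n - 1) k x)) * a k) x := by
    rintro (_ | k) -
    · simpa using (hasDerivAt_bp_zero n x).mul_const (a 0)
    · simpa using (hasDerivAt_bp_succ n k x).mul_const (a (k + 1))
  refine (HasDerivAt.fun_sum hterm).congr_deriv ?_
  rcases n with _ | m
  · simp
  have hshift : ∑ k ∈ Finset.range (m + 1), bp m k x * a k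
      = ∑ k ∈ Finset.range (m + 1), bp m (k + 1) x * a (k + 1) + bp m 0 x * a 0 := by
    rw [← Finset.sum_range_succ' (fun k => bp m k x * a k), Finset.sum_range_succ _ (m + 1),
      bp_of_lt (Nat.lt_succ_self m), zero_mul, add_zero]
  have hsummation : ∑ k ∈ Finset.range (m + 1), bp m k x * (a (k + 1) - a k)
      = ∑ k ∈ Finset.range (m + 1), (bp m k x - bp m (k + 1) x) * a (k + 1) - bp m 0 x * a 0 := by
    simp only [mul_sub, sub_mul, Finset.sum_sub_distrib, hshift]
    ring
  rw [Finset.sum_range_succ', Nat.add_sub_cancel, hsummation]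
  simp only [Nat.add_sub_cancel, Nat.succ_ne_zero, if_false, if_true]
  rw [mul_sub, Finset.mul_sum, sub_eq_add_neg]
  congr 1
  · exact Finset.sum_congr rfl fun k _ => by ring
  · ring

lemma integral_bp_succ_mul_sub_integral_bp_mul {n k : ℕ} (hk : k < n) {g g' : ℝ → ℝ}
    (hg : ∀ t ∈ Icc (0:ℝ) 1, HasDerivWithinAt g (g' t) (Icc 0 1) t)
    (hg' : IntervalIntegrable g' volume 0 1) :
    (∫ t in (0:ℝ)..1, bp n (k + 1) t * g t) - ∫ t in (0:ℝ)..1, bp n k t * g t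
      = (n + 1 : ℝ)⁻¹ * ∫ t in (0:ℝ)..1, bp (n + 1) (k + 1) t * g' t := by
  have hunit : [[(0:ℝ), 1]] = Icc 0 1 := Set.uIcc_of_le zero_le_one
  have hgc : ContinuousOn g [[0, 1]] :=
    hunit ▸ fun t ht => (hg t ht).continuousWithinAt
  have hibp := intervalIntegral.integral_mul_deriv_eq_deriv_mul_of_hasDerivWithinAt (v := g)
    (fun t _ => (hasDerivAt_bp_succ (n + 1) k t).hasDerivWithinAt) (hunit ▸ hg)
    ((continuous_const.mul ((continuous_bp _ _).sub (continuous_bp _ _))).intervalIntegrable 0 1)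
    hg'
  have hvanish₁ : bp (n + 1) (k + 1) 1 = 0 := by simp [bp, show n - k ≠ 0 by omega]
  have hvanish₀ : bp (n + 1) (k + 1) 0 = 0 := by simp [bp]
  have hint : ∀ j, IntervalIntegrable (fun t => bp n j t * g t) volume 0 1 := fun j =>
    ((continuous_bp n j).continuousOn.mul hgc).intervalIntegrable
  have hsplit : (fun t => ((n + 1 : ℕ) : ℝ) * (bp (n + 1 - 1) k t - bp (n + 1 - 1) (k + 1) t) * g t)
      = fun t => (n + 1 : ℝ) * (bp n k t * g t - bp n (k + 1) t * g t) := by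
    funext t; push_cast; ring
  rw [hvanish₀, hvanish₁, hsplit, intervalIntegral.integral_const_mul,
    intervalIntegral.integral_sub (hint k) (hint (k + 1))] at hibp
  rw [hibp]
  field_simp
  ring

lemma integral_bp {n k : ℕ} (hk : k ≤ n) : ∫ t in (0:ℝ)..1, bp n k t = (n + 1 : ℝ)⁻¹ := by
  have hstep : ∀ j < n, ∫ t in (0:ℝ)..1, bp n (j + 1) t = ∫ t in (0:ℝ)..1, bp n j t :=
    fun j hj => by
      simpa [sub_eq_zero] using integral_bp_succ_mul_sub_integral_bp_mul hj
        (g := fun _ => 1) (g' := fun _ => 0) (fun t _ => hasDerivWithinAt_const t _ 1)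
        intervalIntegrable_const
  have hconst : ∀ j ≤ n, ∫ t in (0:ℝ)..1, bp n j t = ∫ t in (0:ℝ)..1, bp n 0 t := by
    intro j hj
    induction j with
    | zero => rfl
    | succ j ih => rw [hstep j hj, ih (by omega)]
  have htotal : ∑ j ∈ Finset.range (n + 1), ∫ t in (0:ℝ)..1, bp n j t = 1 := by
    rw [← intervalIntegral.integral_finsetSum fun j _ => (continuous_bp n j).intervalIntegrable 0 1]
    simp [sum_bp]
  rw [Finset.sum_congr rfl fun j hj => hconst j (Finset.mem_range_succ_iff.mp hj)] at htotal
  simp only [Finset.sum_const, Finset.card_range, nsmul_eq_mul, Nat.cast_succ] at htotal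
  rw [hconst k hk, eq_inv_of_mul_eq_one_right htotal]

lemma abs_integral_bp_mul_le {n k : ℕ} (hk : k ≤ n) {g : ℝ → ℝ} {M : ℝ}
    (hM : ∀ t ∈ Icc (0:ℝ) 1, |g t| ≤ M) :
    |∫ t in (0:ℝ)..1, bp n k t * g t| ≤ M / (n + 1) := by
  have hle : ∀ᵐ t, t ∈ Ioc (0:ℝ) 1 → ‖bp n k t * g t‖ ≤ bp n k t * M :=
    Filter.Eventually.of_forall fun t ht => by
      rw [Real.norm_eq_abs, abs_mul, abs_of_nonneg (bp_nonneg n k (Ioc_subset_Icc_self ht))]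
      exact mul_le_mul_of_nonneg_left (hM t (Ioc_subset_Icc_self ht))
        (bp_nonneg n k (Ioc_subset_Icc_self ht))
  calc |∫ t in (0:ℝ)..1, bp n k t * g t|
      ≤ ∫ t in (0:ℝ)..1, bp n k t * M :=
        intervalIntegral.norm_integral_le_of_norm_le zero_le_one hle
          (((continuous_bp n k).mul continuous_const).intervalIntegrable 0 1)
    _ = M / (n + 1) := by rw [intervalIntegral.integral_mul_const, integral_bp hk]; ring

lemma abs_sum_bp_mul_le {n : ℕ} {x : ℝ} (hx : x ∈ Icc (0:ℝ) 1) {d : ℕ → ℝ} {D : ℝ}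
    (hD : 0 ≤ D) (hd : ∀ k < n, |d k| ≤ D) :
    |∑ k ∈ Finset.range n, bp (n - 1) k x * d k| ≤ D := by
  rcases n with _ | m
  · simpa using hD
  calc |∑ k ∈ Finset.range (m + 1), bp (m + 1 - 1) k x * d k|
      ≤ ∑ k ∈ Finset.range (m + 1), bp m k x * D := by
        refine (Finset.abs_sum_le_sum_abs _ _).trans (Finset.sum_le_sum fun k hk => ?_)
        rw [abs_mul, abs_of_nonneg (bp_nonneg _ _ hx)]
        exact mul_le_mul_of_nonneg_left (hd k (Finset.mem_range.mp hk)) (bp_nonneg _ _ hx)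
    _ = D := by rw [← Finset.sum_mul, sum_bp, one_mul]

lemma abs_le_supNorm {g : ℝ → ℝ} (hg : ContinuousOn g (Icc 0 1)) {t : ℝ} (ht : t ∈ Icc (0:ℝ) 1) :
    |g t| ≤ supNorm g := by
  obtain ⟨C, hC⟩ := isCompact_Icc.exists_bound_of_continuousOn hg
  exact le_csSup ⟨C, by rintro _ ⟨s, hs, rfl⟩; exact hC s hs⟩ ⟨t, ht, rfl⟩

lemma supNorm_nonneg (g : ℝ → ℝ) : 0 ≤ supNorm g :=
  Real.sSup_nonneg fun _ ⟨_, _, hy⟩ => hy ▸ abs_nonneg _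

theorem stmt15_general (n : ℕ) (f f' : ℝ → ℝ)
    (hf : ∀ t ∈ Icc (0:ℝ) 1, HasDerivWithinAt f (f' t) (Icc 0 1) t)
    (hf' : ContinuousOn f' (Icc 0 1)) (x : ℝ) (hx : x ∈ Icc (0:ℝ) 1) :
    |deriv (fun y => Dur n f y) x| ≤ (n : ℝ) / ((n : ℝ) + 2) * supNorm f' ∧
    (n : ℝ) / ((n : ℝ) + 2) * supNorm f' ≤ supNorm f' := by
  set M := supNorm f'
  set c : ℕ → ℝ := fun k => ∫ t in (0:ℝ)..1, bp n k t * f t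
  have hDur : HasDerivAt (fun y => Dur n f y)
      ((n + 1) * (n * ∑ k ∈ Finset.range n, bp (n - 1) k x * (c (k + 1) - c k))) x :=
    (hasDerivAt_sum_bp_mul n c x).const_mul _
  have hc : ∀ k < n, |c (k + 1) - c k| ≤ M / ((n + 1) * (n + 2)) := fun k hk => by
    have hI := abs_integral_bp_mul_le (n := n + 1) (Nat.succ_le_succ hk.le)
      fun t ht => abs_le_supNorm hf' ht
    rw [integral_bp_succ_mul_sub_integral_bp_mul hk hf
      (hf'.intervalIntegrable_of_Icc zero_le_one), abs_mul, abs_of_pos (by positivity)]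
    calc (n + 1 : ℝ)⁻¹ * |∫ t in (0:ℝ)..1, bp (n + 1) (k + 1) t * f' t|
        ≤ (n + 1 : ℝ)⁻¹ * (M / ((n + 1 : ℕ) + 1)) := by gcongr
      _ = M / ((n + 1) * (n + 2)) := by push_cast; field_simp; ring
  have hratio : (n : ℝ) / (n + 2) ≤ 1 := (div_le_one (by positivity)).2 (by linarith)
  refine ⟨?_, mul_le_of_le_one_left (supNorm_nonneg f') hratio⟩
  rw [hDur.deriv, abs_mul, abs_mul, abs_of_pos (by positivity), abs_of_nonneg (by positivity)]
  calc (n + 1 : ℝ) * (n * |∑ k ∈ Finset.range n, bp (n - 1) k x * (c (k + 1) - c k)|)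
      ≤ (n + 1) * (n * (M / ((n + 1) * (n + 2)))) := by
        gcongr
        exact abs_sum_bp_mul_le hx (div_nonneg (supNorm_nonneg f') (by positivity)) hc
    _ = n / (n + 2) * M := by field_simp

/-- bound on the derivative of `D_n f`. -/
theorem stmt15 (n : ℕ) (hn : 1 ≤ n) (f f' : ℝ → ℝ)
    (hf : ∀ t ∈ Icc (0:ℝ) 1, HasDerivWithinAt f (f' t) (Icc 0 1) t)
    (hf' : ContinuousOn f' (Icc 0 1)) (x : ℝ) (hx : x ∈ Icc (0:ℝ) 1) :
    |deriv (fun y => Dur n f y) x| ≤ (n : ℝ) / ((n : ℝ) + 2) * supNorm f' ∧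
    (n : ℝ) / ((n : ℝ) + 2) * supNorm f' ≤ supNorm f' :=
  stmt15_general n f f' hf hf' x hx
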